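/- Let n, d, n₀, d₀, c be complex numbers with (n,d) ≠ (0,0), (n₀,d₀) ≠ (0,0), and suppose d - nc = 0, d = 0, and d₀ - n₀c ≠ 0 with |n₀/(d₀ - n₀c)| ≤ g for some g > 0 and c = 0 forced (since n ≠ 0 and d - nc = 0 with d = 0 gives c = 0). Then the chordal distance |n d₀ - n₀ d| / (√(|n|²+|d|²)·√(|n₀|²+|d₀|²)) ≥ min{ (1/3)·(1/g), 1/3 }. -/

import Mathlib

/-!
With `d = 0` the point `n / d` is `∞` and `c = 0`, so the chordal distance collapses to
`‖d₀‖ / √(‖n₀‖² + ‖d₀‖²)`, the chordal distance from `n₀ / d₀` to `∞`. The gain bound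
`‖n₀‖ ≤ g ‖d₀‖` makes this at least `1 / (g + 1)`, and `1 / (g + 1)` dominates
`min (1 / (3g)) (1 / 3)` by splitting at `g = 1`.
-/

/-- The chordal distance between the points `n / d` and `n₀ / d₀` of the projective line. -/
noncomputable def chordalDist {𝕜 : Type*} [NormedField 𝕜] (n d n₀ d₀ : 𝕜) : ℝ :=
  ‖n * d₀ - n₀ * d‖ / (Real.sqrt (‖n‖ ^ 2 + ‖d‖ ^ 2) * Real.sqrt (‖n₀‖ ^ 2 + ‖d₀‖ ^ 2))

theorem chordalDist_zero_denom_left {𝕜 : Type*} [NormedField 𝕜] {n : 𝕜} (hn : n ≠ 0)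
    (n₀ d₀ : 𝕜) :
    chordalDist n 0 n₀ d₀ = ‖d₀‖ / Real.sqrt (‖n₀‖ ^ 2 + ‖d₀‖ ^ 2) := by
  have hn' : ‖n‖ ≠ 0 := norm_ne_zero_iff.mpr hn
  rw [chordalDist, mul_zero, sub_zero, norm_zero, norm_mul, sq 0, mul_zero, add_zero,
    Real.sqrt_sq (norm_nonneg n), mul_div_mul_left _ _ hn']

theorem one_div_add_one_le_div_sqrt {a b g : ℝ} (ha : 0 ≤ a) (hb : 0 < b) (hab : a ≤ g * b) :
    1 / (g + 1) ≤ b / Real.sqrt (a ^ 2 + b ^ 2) := by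
  have hg : 0 ≤ g := nonneg_of_mul_nonneg_left (ha.trans hab) hb
  have hsqrt : Real.sqrt (a ^ 2 + b ^ 2) ≤ (g + 1) * b := by
    rw [Real.sqrt_le_left (by positivity)]
    nlinarith
  rw [div_le_div_iff₀ (by linarith) (by positivity)]
  linarith

theorem min_third_le_one_div_add_one {g : ℝ} (hg : 0 ≤ g) :
    min (1 / 3 * (1 / g)) (1 / 3) ≤ 1 / (g + 1) := by
  rcases le_total g 1 with h | h
  · calc min (1 / 3 * (1 / g)) (1 / 3) ≤ 1 / 3 := min_le_right _ _
      _ ≤ 1 / (g + 1) := by rw [div_le_div_iff₀ (by norm_num) (by linarith)]; linarith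
  · calc min (1 / 3 * (1 / g)) (1 / 3) ≤ 1 / 3 * (1 / g) := min_le_left _ _
      _ = 1 / (3 * g) := by rw [div_mul_div_comm, one_mul]
      _ ≤ 1 / (g + 1) := by rw [div_le_div_iff₀ (by linarith) (by linarith)]; linarith

theorem case_one_estimate_general (n d n₀ d₀ c : ℂ) (g : ℝ)
    (hnd : ¬(n = 0 ∧ d = 0))
    (hd : d = 0) (hden₀ : d₀ - n₀ * c ≠ 0)
    (hg₀ : ‖n₀ / (d₀ - n₀ * c)‖ ≤ g) (hc : c = 0) :
    ‖n * d₀ - n₀ * d‖ /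
        (Real.sqrt (‖n‖ ^ 2 + ‖d‖ ^ 2) * Real.sqrt (‖n₀‖ ^ 2 + ‖d₀‖ ^ 2)) ≥
      min (1 / 3 * (1 / g)) (1 / 3) := by
  subst hd hc
  rw [mul_zero, sub_zero] at hden₀ hg₀
  have hn : n ≠ 0 := fun h => hnd ⟨h, rfl⟩
  have hd₀ : 0 < ‖d₀‖ := norm_pos_iff.mpr hden₀
  have hgain : ‖n₀‖ ≤ g * ‖d₀‖ := by rwa [norm_div, div_le_iff₀ hd₀] at hg₀
  change min (1 / 3 * (1 / g)) (1 / 3) ≤ chordalDist n 0 n₀ d₀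
  rw [chordalDist_zero_denom_left hn]
  exact (min_third_le_one_div_add_one ((norm_nonneg _).trans hg₀)).trans
    (one_div_add_one_le_div_sqrt (norm_nonneg n₀) hd₀ hgain)

/-- Pointwise case 1° in the proof of the main robustness theorem: if the
perturbed closed-loop denominator vanishes with `d = 0` (forcing `c = 0`),
then the chordal distance between `(n,d)` and `(n₀,d₀)` is at least
`min ((1/3)·(1/g)) (1/3)`. -/
theorem case_one_estimate (n d n₀ d₀ c : ℂ) (g : ℝ) (hg : 0 < g)
    (hnd : ¬(n = 0 ∧ d = 0)) (hnd₀ : ¬(n₀ = 0 ∧ d₀ = 0))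
    (hden : d - n * c = 0) (hd : d = 0) (hden₀ : d₀ - n₀ * c ≠ 0)
    (hg₀ : ‖n₀ / (d₀ - n₀ * c)‖ ≤ g) (hc : c = 0) :
    ‖n * d₀ - n₀ * d‖ /
        (Real.sqrt (‖n‖ ^ 2 + ‖d‖ ^ 2) * Real.sqrt (‖n₀‖ ^ 2 + ‖d₀‖ ^ 2)) ≥
      min (1 / 3 * (1 / g)) (1 / 3) :=
  case_one_estimate_general n d n₀ d₀ c g hnd hd hden₀ hg₀ hc
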